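/- arXiv:2003.11926 — 7 statements merged into one kernel-verified Lean document; each statement's English description precedes it below -/
import Mathlib

section
/- Let (g, ·) be a pre-Lie algebra and V a vector space with linear maps L, R: g → gl(V). Then (V; L, R) is a bimodule over g if and only if (V*; L* − R*, −R*) is a bimodule over g, where L*, R*: g → gl(V*) are defined by ⟨L*_x ξ, u⟩ = −⟨ξ, L_x u⟩ and ⟨R*_x ξ, u⟩ = −⟨ξ, R_x u⟩. -/
/-!
Write `D₁(x, y)` and `D₂(x, y)` for the differences of the two sides of the bimodule axioms.
Transposition `End V → End V*` is an injective anti-homomorphism, and the dual pair is the image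
of `(R − L, R)` under it. A noncommutative-ring computation shows that the defects of the dual
pair are the transposes of `D₂(x, y) − D₂(y, x) − D₁(x, y)` and of `D₂(x, y)`, so the two families
of defects vanish together.
-/

/-- A bimodule `(W; L, R)` over a pre-Lie algebra `(G, m)`. -/
def IsPreLieBimodule {𝕜 G W : Type*} [Field 𝕜] [AddCommGroup G] [Module 𝕜 G]
    [AddCommGroup W] [Module 𝕜 W]
    (m : G →ₗ[𝕜] G →ₗ[𝕜] G) (L R : G → W →ₗ[𝕜] W) : Prop :=
  (∀ (x y : G) (u : W), L x (L y u) - L (m x y) u = L y (L x u) - L (m y x) u) ∧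
  (∀ (x y : G) (u : W), L x (R y u) - R y (L x u) = R (m x y) u - R y (R x u))

theorem Module.Dual.transpose_injective {R M M' : Type*} [CommRing R] [AddCommGroup M]
    [Module R M] [AddCommGroup M'] [Module R M'] [Module.Projective R M'] :
    Function.Injective (Module.Dual.transpose : (M →ₗ[R] M') →ₗ[R] _) := by
  refine (injective_iff_map_eq_zero _).2 fun f hf => LinearMap.ext fun u => ?_
  refine (Module.forall_dual_apply_eq_zero_iff R (f u)).1 fun φ => ?_
  exact LinearMap.congr_fun (LinearMap.congr_fun hf φ) u

section Defects

variable {G A B : Type*} [Ring A] [Ring B] (μ : G → G → G)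

def leftDefect (L : G → A) (x y : G) : A :=
  L x * L y - L (μ x y) - (L y * L x - L (μ y x))

def mixedDefect (L R : G → A) (x y : G) : A :=
  L x * R y - R y * L x - (R (μ x y) - R y * R x)

variable {μ} (L R : G → A) {T : A →+ B} (hT : ∀ a b, T (a * b) = T b * T a)
include hT

theorem mixedDefect_antiHom (x y : G) :
    mixedDefect μ (fun x => T (R x - L x)) (fun x => T (R x)) x y =
      T (mixedDefect μ L R x y) := by
  simp only [mixedDefect, ← hT, ← map_sub]
  congr 1
  noncomm_ring

theorem leftDefect_antiHom (x y : G) :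
    leftDefect μ (fun x => T (R x - L x)) x y =
      T (mixedDefect μ L R x y - mixedDefect μ L R y x - leftDefect μ L x y) := by
  simp only [leftDefect, mixedDefect, ← hT, ← map_sub]
  congr 1
  noncomm_ring

theorem defects_antiHom_eq_zero_iff (hTi : Function.Injective T) :
    ((∀ x y, leftDefect μ (fun x => T (R x - L x)) x y = 0) ∧
        ∀ x y, mixedDefect μ (fun x => T (R x - L x)) (fun x => T (R x)) x y = 0) ↔
      (∀ x y, leftDefect μ L x y = 0) ∧ ∀ x y, mixedDefect μ L R x y = 0 := by
  simp only [leftDefect_antiHom L R hT, mixedDefect_antiHom L R hT,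
    map_eq_zero_iff T hTi]
  constructor
  · rintro ⟨hleft, hmixed⟩
    refine ⟨fun x y => ?_, hmixed⟩
    simpa [hmixed] using hleft x y
  · rintro ⟨hleft, hmixed⟩
    exact ⟨fun x y => by simp [hleft, hmixed], hmixed⟩

end Defects

theorem isPreLieBimodule_iff_defects {𝕜 G W : Type*} [Field 𝕜] [AddCommGroup G] [Module 𝕜 G]
    [AddCommGroup W] [Module 𝕜 W] (m : G →ₗ[𝕜] G →ₗ[𝕜] G) (L R : G → Module.End 𝕜 W) :
    IsPreLieBimodule m L R ↔
      (∀ x y, leftDefect (fun x y => m x y) L x y = 0) ∧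
        ∀ x y, mixedDefect (fun x y => m x y) L R x y = 0 := by
  simp only [IsPreLieBimodule, leftDefect, mixedDefect, sub_eq_zero, LinearMap.ext_iff,
    LinearMap.sub_apply, Module.End.mul_apply]

theorem dual_bimodule_iff_general
    {𝕜 G V : Type*} [Field 𝕜] [AddCommGroup G] [Module 𝕜 G]
    [AddCommGroup V] [Module 𝕜 V]
    (m : G →ₗ[𝕜] G →ₗ[𝕜] G)
    (L R : G →ₗ[𝕜] Module.End 𝕜 V) :
    IsPreLieBimodule m (fun x => L x) (fun x => R x) ↔
      IsPreLieBimodule m (fun x => -(L x).dualMap + (R x).dualMap)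
        (fun x => (R x).dualMap) := by
  let T : Module.End 𝕜 V →+ Module.End 𝕜 (Module.Dual 𝕜 V) :=
    (Module.Dual.transpose (R := 𝕜)).toAddMonoidHom
  have hdual : (fun x => -(L x).dualMap + (R x).dualMap) = fun x => T (R x - L x) := by
    funext x
    exact (neg_add_eq_sub _ _).trans (map_sub T _ _).symm
  rw [hdual, isPreLieBimodule_iff_defects, isPreLieBimodule_iff_defects]
  exact (defects_antiHom_eq_zero_iff (fun x => L x) (fun x => R x) Module.Dual.transpose_comp
    Module.Dual.transpose_injective).symm

/-- `(V; L, R)` is a bimodule over the pre-Lie algebra `g` iff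
`(V*; L* − R*, −R*)` is a bimodule over `g`, where
`⟨L*_x ξ, u⟩ = −⟨ξ, L_x u⟩` and `⟨R*_x ξ, u⟩ = −⟨ξ, R_x u⟩`. -/
theorem dual_bimodule_iff
    {𝕜 G V : Type*} [Field 𝕜] [CharZero 𝕜] [AddCommGroup G] [Module 𝕜 G]
    [AddCommGroup V] [Module 𝕜 V] [FiniteDimensional 𝕜 V]
    (m : G →ₗ[𝕜] G →ₗ[𝕜] G)
    (hm : ∀ x y z : G, m (m x y) z - m x (m y z) = m (m y x) z - m y (m x z))
    (L R : G →ₗ[𝕜] Module.End 𝕜 V) :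
    IsPreLieBimodule m (fun x => L x) (fun x => R x) ↔
      IsPreLieBimodule m (fun x => -(L x).dualMap + (R x).dualMap)
        (fun x => (R x).dualMap) :=
  dual_bimodule_iff_general m L R
end

section
/- Let (𝒢, g₁, g₂) be a twilled pre-Lie algebra with multiplication ∗ (so g₁ and g₂ are subalgebras), and let H: g₂ → g₁ be a linear map. Then the twisting of 𝒢 by H is again a twilled pre-Lie algebra (i.e. both g₁ and g₂ remain subalgebras) if and only if for all u, v ∈ g₂: H(u) ∗₁ H(v) + H(u) ∗₂ v + u ∗₂ H(v) = H(H(u) ∗₁ v + u ∗₁ H(v)) + H(u ∗₂ v), where ∗₁, ∗₂ denote the g₁- and g₂-components of the multiplication ∗ on 𝒢. -/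
/-- The pre-Lie identity for a multiplication on an additive group. -/
def IsPreLieMul {A : Type*} [AddCommGroup A] (f : A → A → A) : Prop :=
  ∀ x y z : A, f (f x y) z - f x (f y z) = f (f y x) z - f y (f x z)

/-! Since `e^{Ĥ}` fixes `g₁`, the twisted product on `g₁` is the old one, so `g₁` stays a
subalgebra. On `g₂`, the `g₁`-component of `u ∗^H v` is `p.1 - H p.2` with
`p = (H u + u) ∗ (H v + v)`; expanding `p` bilinearly and using that `g₁, g₂` are subalgebras,
this is exactly the difference of the two sides of the Maurer–Cartan equation. -/

section TwilledProduct

variable {R G1 G2 : Type*} [CommSemiring R]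
  [AddCommGroup G1] [Module R G1] [AddCommGroup G2] [Module R G2]
  (m : (G1 × G2) →ₗ[R] (G1 × G2) →ₗ[R] (G1 × G2))

theorem LinearMap.prod_apply₂_eq_add (a b : G1) (u v : G2) :
    m (a, u) (b, v) = m (a, 0) (b, 0) + m (a, 0) (0, v) + m (0, u) (b, 0) + m (0, u) (0, v) := by
  have split : ∀ (x : G1) (w : G2), ((x, w) : G1 × G2) = (x, 0) + (0, w) := by simp
  rw [split a u, split b v]
  simp only [map_add, LinearMap.add_apply]
  abel

theorem mul_graph_fst_sub_map_snd (hsub1 : ∀ x y : G1, (m (x, (0 : G2)) (y, 0)).2 = 0)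
    (hsub2 : ∀ u v : G2, (m ((0 : G1), u) (0, v)).1 = 0) (H : G2 →ₗ[R] G1) (u v : G2) :
    (m (H u, u) (H v, v)).1 - H (m (H u, u) (H v, v)).2 =
      ((m (H u, (0 : G2)) (H v, 0)).1 + (m (H u, (0 : G2)) (0, v)).1 +
          (m ((0 : G1), u) (H v, 0)).1) -
        (H ((m (H u, (0 : G2)) (0, v)).2 + (m ((0 : G1), u) (H v, 0)).2) +
          H ((m ((0 : G1), u) (0, v)).2)) := by
  rw [m.prod_apply₂_eq_add]
  simp only [Prod.fst_add, Prod.snd_add, hsub1, hsub2, map_add, map_zero]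
  abel

end TwilledProduct

theorem twisted_twilled_iff_MaurerCartan_general
    {𝕜 G1 G2 : Type*} [Field 𝕜]
    [AddCommGroup G1] [Module 𝕜 G1] [AddCommGroup G2] [Module 𝕜 G2]
    (m : (G1 × G2) →ₗ[𝕜] (G1 × G2) →ₗ[𝕜] (G1 × G2))
    (hsub1 : ∀ x y : G1, (m (x, (0 : G2)) (y, 0)).2 = 0)
    (hsub2 : ∀ u v : G2, (m ((0 : G1), u) (0, v)).1 = 0)
    (H : G2 →ₗ[𝕜] G1) :
    let e : G1 × G2 → G1 × G2 := fun p => (p.1 + H p.2, p.2)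
    let em : G1 × G2 → G1 × G2 := fun p => (p.1 - H p.2, p.2)
    let mH : (G1 × G2) → (G1 × G2) → (G1 × G2) := fun a b => em (m (e a) (e b))
    ((∀ x y : G1, (mH (x, (0 : G2)) (y, 0)).2 = 0) ∧
     (∀ u v : G2, (mH ((0 : G1), u) (0, v)).1 = 0)) ↔
    (∀ u v : G2,
      (m (H u, (0 : G2)) (H v, 0)).1 + (m (H u, (0 : G2)) (0, v)).1 +
          (m ((0 : G1), u) (H v, 0)).1 =
        H ((m (H u, (0 : G2)) (0, v)).2 + (m ((0 : G1), u) (H v, 0)).2) +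
          H ((m ((0 : G1), u) (0, v)).2)) := by
  intro e em mH
  have twisted_g1 : ∀ x y : G1, (mH (x, 0) (y, 0)).2 = (m (x, 0) (y, 0)).2 := by
    simp [mH, em, e]
  have twisted_g2 : ∀ u v : G2, (mH (0, u) (0, v)).1 =
      (m (H u, u) (H v, v)).1 - H (m (H u, u) (H v, v)).2 := by
    simp [mH, em, e]
  simp only [twisted_g1, twisted_g2, hsub1, mul_graph_fst_sub_map_snd m hsub1 hsub2,
    sub_eq_zero, forall_const, true_and]

/-- Let `(𝒢 = g₁ ⊕ g₂, ∗)` be a twilled pre-Lie algebra (both `g₁`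
and `g₂` are subalgebras) and `H : g₂ → g₁` linear.  The twisting of `𝒢` by `H`
(i.e. `a ∗^H b = e^{−Ĥ}(e^{Ĥ}a ∗ e^{Ĥ}b)`, `e^{Ĥ}(x,v) = (x + H v, v)`) is
again a twilled pre-Lie algebra iff for all `u, v ∈ g₂`:
`H(u)∗₁H(v) + H(u)∗₂v + u∗₂H(v) = H(H(u)∗₁v + u∗₁H(v)) + H(u∗₂v)`,
where subscripts denote `g₁`/`g₂`-components of `∗` (`.1` is the `g₁`-component
and `.2` the `g₂`-component). -/
theorem twisted_twilled_iff_MaurerCartan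
    {𝕜 G1 G2 : Type*} [Field 𝕜] [CharZero 𝕜]
    [AddCommGroup G1] [Module 𝕜 G1] [AddCommGroup G2] [Module 𝕜 G2]
    (m : (G1 × G2) →ₗ[𝕜] (G1 × G2) →ₗ[𝕜] (G1 × G2))
    (hm : IsPreLieMul fun a b => m a b)
    (hsub1 : ∀ x y : G1, (m (x, (0 : G2)) (y, 0)).2 = 0)
    (hsub2 : ∀ u v : G2, (m ((0 : G1), u) (0, v)).1 = 0)
    (H : G2 →ₗ[𝕜] G1) :
    let e : G1 × G2 → G1 × G2 := fun p => (p.1 + H p.2, p.2)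
    let em : G1 × G2 → G1 × G2 := fun p => (p.1 - H p.2, p.2)
    let mH : (G1 × G2) → (G1 × G2) → (G1 × G2) := fun a b => em (m (e a) (e b))
    ((∀ x y : G1, (mH (x, (0 : G2)) (y, 0)).2 = 0) ∧
     (∀ u v : G2, (mH ((0 : G1), u) (0, v)).1 = 0)) ↔
    (∀ u v : G2,
      (m (H u, (0 : G2)) (H v, 0)).1 + (m (H u, (0 : G2)) (0, v)).1 +
          (m ((0 : G1), u) (H v, 0)).1 =
        H ((m (H u, (0 : G2)) (0, v)).2 + (m ((0 : G1), u) (H v, 0)).2) +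
          H ((m ((0 : G1), u) (0, v)).2)) :=
  twisted_twilled_iff_MaurerCartan_general m hsub1 hsub2 H
end

section
/- Let (𝒢, g₁, g₂) be a twilled pre-Lie algebra with components ∗₁, ∗₂ of the multiplication, and suppose H: g₂ → g₁ satisfies the Maurer–Cartan condition H(u)∗₁H(v) + H(u)∗₂v + u∗₂H(v) = H(H(u)∗₁v + u∗₁H(v)) + H(u∗₂v) for all u,v ∈ g₂. Then u ·^H v := u∗₂v + H(u)∗₁v + u∗₁H(v) defines a pre-Lie algebra structure on g₂. -/
theorem IsPreLieMul.of_injective {A B : Type*} [AddCommGroup A] [AddCommGroup B]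
    {f : B → B → B} {g : A → A → A} (hf : IsPreLieMul f) (φ : A →+ B)
    (hφ : Function.Injective φ) (hmul : ∀ x y, φ (g x y) = f (φ x) (φ y)) :
    IsPreLieMul g := by
  intro x y z
  apply hφ
  simpa only [map_sub, hmul] using hf (φ x) (φ y) (φ z)

section Twisted

variable {𝕜 G1 G2 : Type*} [CommSemiring 𝕜] [AddCommGroup G1] [Module 𝕜 G1]
  [AddCommGroup G2] [Module 𝕜 G2]
  (m : (G1 × G2) →ₗ[𝕜] (G1 × G2) →ₗ[𝕜] (G1 × G2)) (H : G2 →ₗ[𝕜] G1)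

/-- The twisted product `u ·^H v = u ∗₂ v + H(u) ∗₁ v + u ∗₁ H(v)` on `g₂`. -/
def twistedMul (u v : G2) : G2 :=
  (m ((0 : G1), u) (0, v)).2 + (m (H u, (0 : G2)) (0, v)).2 + (m ((0 : G1), u) (H v, 0)).2

theorem mul_graph_eq_graph_twistedMul
    (hsub1 : ∀ x y : G1, (m (x, (0 : G2)) (y, 0)).2 = 0)
    (hsub2 : ∀ u v : G2, (m ((0 : G1), u) (0, v)).1 = 0)
    (hMC : ∀ u v : G2,
      (m (H u, (0 : G2)) (H v, 0)).1 + (m (H u, (0 : G2)) (0, v)).1 +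
          (m ((0 : G1), u) (H v, 0)).1 =
        H ((m (H u, (0 : G2)) (0, v)).2 + (m ((0 : G1), u) (H v, 0)).2) +
          H ((m ((0 : G1), u) (0, v)).2))
    (u v : G2) :
    m (H u, u) (H v, v) = (H (twistedMul m H u v), twistedMul m H u v) := by
  have split : ∀ w : G2, ((H w, w) : G1 × G2) = (H w, 0) + (0, w) := fun w => by simp
  rw [split u, split v]
  simp only [map_add, LinearMap.add_apply]
  ext
  · have h := hMC u v
    simp only [Prod.fst_add, twistedMul, map_add, hsub2]
    rw [map_add] at h
    abel_nf at h ⊢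
    exact h
  · simp only [Prod.snd_add, twistedMul, hsub1]
    abel

end Twisted

theorem MaurerCartan_gives_preLie_on_g2_general
    {𝕜 G1 G2 : Type*} [Field 𝕜]
    [AddCommGroup G1] [Module 𝕜 G1] [AddCommGroup G2] [Module 𝕜 G2]
    (m : (G1 × G2) →ₗ[𝕜] (G1 × G2) →ₗ[𝕜] (G1 × G2))
    (hm : IsPreLieMul fun a b => m a b)
    (hsub1 : ∀ x y : G1, (m (x, (0 : G2)) (y, 0)).2 = 0)
    (hsub2 : ∀ u v : G2, (m ((0 : G1), u) (0, v)).1 = 0)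
    (H : G2 →ₗ[𝕜] G1)
    (hMC : ∀ u v : G2,
      (m (H u, (0 : G2)) (H v, 0)).1 + (m (H u, (0 : G2)) (0, v)).1 +
          (m ((0 : G1), u) (H v, 0)).1 =
        H ((m (H u, (0 : G2)) (0, v)).2 + (m ((0 : G1), u) (H v, 0)).2) +
          H ((m ((0 : G1), u) (0, v)).2)) :
    IsPreLieMul (fun u v : G2 =>
      (m ((0 : G1), u) (0, v)).2 + (m (H u, (0 : G2)) (0, v)).2 +
        (m ((0 : G1), u) (H v, 0)).2) := by
  have graph_injective : Function.Injective (H.prod LinearMap.id) :=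
    fun u v huv => congrArg Prod.snd huv
  refine hm.of_injective (H.prod LinearMap.id).toAddMonoidHom graph_injective fun u v => ?_
  exact (mul_graph_eq_graph_twistedMul m H hsub1 hsub2 hMC u v).symm

/-- Let `(𝒢 = g₁ ⊕ g₂, ∗)` be a twilled pre-Lie algebra and
`H : g₂ → g₁` satisfy the Maurer–Cartan condition
`H(u)∗₁H(v) + H(u)∗₂v + u∗₂H(v) = H(H(u)∗₁v + u∗₁H(v)) + H(u∗₂v)`.
Then `u ·^H v := u∗₂v + H(u)∗₁v + u∗₁H(v)` is a pre-Lie structure on `g₂`.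
(Here `.1`/`.2` denote `g₁`/`g₂` components of the products in `𝒢`.) -/
theorem MaurerCartan_gives_preLie_on_g2
    {𝕜 G1 G2 : Type*} [Field 𝕜] [CharZero 𝕜]
    [AddCommGroup G1] [Module 𝕜 G1] [AddCommGroup G2] [Module 𝕜 G2]
    (m : (G1 × G2) →ₗ[𝕜] (G1 × G2) →ₗ[𝕜] (G1 × G2))
    (hm : IsPreLieMul fun a b => m a b)
    (hsub1 : ∀ x y : G1, (m (x, (0 : G2)) (y, 0)).2 = 0)
    (hsub2 : ∀ u v : G2, (m ((0 : G1), u) (0, v)).1 = 0)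
    (H : G2 →ₗ[𝕜] G1)
    (hMC : ∀ u v : G2,
      (m (H u, (0 : G2)) (H v, 0)).1 + (m (H u, (0 : G2)) (0, v)).1 +
          (m ((0 : G1), u) (H v, 0)).1 =
        H ((m (H u, (0 : G2)) (0, v)).2 + (m ((0 : G1), u) (H v, 0)).2) +
          H ((m ((0 : G1), u) (0, v)).2)) :
    IsPreLieMul (fun u v : G2 =>
      (m ((0 : G1), u) (0, v)).2 + (m (H u, (0 : G2)) (0, v)).2 +
        (m ((0 : G1), u) (H v, 0)).2) :=
  MaurerCartan_gives_preLie_on_g2_general m hm hsub1 hsub2 H hMC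
end

section
/- Let T be an 𝒪-operator on a bimodule (V; L, R) over a pre-Lie algebra (g, ·), i.e. T(u)·T(v) = T(L_{T(u)}v + R_{T(v)}u) for all u,v ∈ V. Then u ·^T v := L_{T(u)}v + R_{T(v)}u defines a pre-Lie algebra structure on V, and T is a pre-Lie algebra homomorphism from (V, ·^T) to (g, ·). -/
/- Because `T` intertwines `·^T` with `m`, the associator of `·^T` splits into an `L L` part,
symmetric in `u, v` by the first bimodule axiom, and `L R`, `R R` parts that the second
bimodule axiom, applied once at `(T u, T w)` and once at `(T v, T w)`, exchanges. -/
theorem isPreLieMul_of_isOOperator {S G V : Type*} [CommSemiring S] [AddCommGroup G]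
    [Module S G] [AddCommGroup V] [Module S V]
    (m : G →ₗ[S] G →ₗ[S] G) (L R : G →ₗ[S] Module.End S V)
    (hL : ∀ (x y : G) (u : V), L x (L y u) - L (m x y) u = L y (L x u) - L (m y x) u)
    (hLR : ∀ (x y : G) (u : V), L x (R y u) - R y (L x u) = R (m x y) u - R y (R x u))
    (T : V →ₗ[S] G) (hT : ∀ u v : V, m (T u) (T v) = T (L (T u) v + R (T v) u)) :
    IsPreLieMul (fun u v : V => L (T u) v + R (T v) u) := by
  intro u v w
  simp only [← hT, map_add]
  linear_combination (norm := module) -hL (T u) (T v) w - hLR (T u) (T w) v + hLR (T v) (T w) u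

theorem O_operator_induced_preLie_general
    {𝕜 G V : Type*} [Field 𝕜] [AddCommGroup G] [Module 𝕜 G]
    [AddCommGroup V] [Module 𝕜 V]
    (m : G →ₗ[𝕜] G →ₗ[𝕜] G)
    (L R : G →ₗ[𝕜] Module.End 𝕜 V)
    (hbim1 : ∀ (x y : G) (u : V),
      L x (L y u) - L (m x y) u = L y (L x u) - L (m y x) u)
    (hbim2 : ∀ (x y : G) (u : V),
      L x (R y u) - R y (L x u) = R (m x y) u - R y (R x u))
    (T : V →ₗ[𝕜] G)
    (hT : ∀ u v : V, m (T u) (T v) = T (L (T u) v + R (T v) u)) :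
    IsPreLieMul (fun u v : V => L (T u) v + R (T v) u) ∧
      ∀ u v : V, T (L (T u) v + R (T v) u) = m (T u) (T v) :=
  ⟨isPreLieMul_of_isOOperator m L R hbim1 hbim2 T hT, fun u v => (hT u v).symm⟩

/-- Let `T` be an 𝒪-operator on a bimodule `(V; L, R)` over a
pre-Lie algebra `(g, ·)`, i.e. `T(u)·T(v) = T(L_{T(u)}v + R_{T(v)}u)`.  Then
`u ·^T v := L_{T(u)}v + R_{T(v)}u` is a pre-Lie structure on `V` and `T` is a
pre-Lie homomorphism from `(V, ·^T)` to `(g, ·)`. -/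
theorem O_operator_induced_preLie
    {𝕜 G V : Type*} [Field 𝕜] [CharZero 𝕜] [AddCommGroup G] [Module 𝕜 G]
    [AddCommGroup V] [Module 𝕜 V]
    (m : G →ₗ[𝕜] G →ₗ[𝕜] G)
    (hm : ∀ x y z : G, m (m x y) z - m x (m y z) = m (m y x) z - m y (m x z))
    (L R : G →ₗ[𝕜] Module.End 𝕜 V)
    (hbim1 : ∀ (x y : G) (u : V),
      L x (L y u) - L (m x y) u = L y (L x u) - L (m y x) u)
    (hbim2 : ∀ (x y : G) (u : V),
      L x (R y u) - R y (L x u) = R (m x y) u - R y (R x u))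
    (T : V →ₗ[𝕜] G)
    (hT : ∀ u v : V, m (T u) (T v) = T (L (T u) v + R (T v) u)) :
    IsPreLieMul (fun u v : V => L (T u) v + R (T v) u) ∧
      ∀ u v : V, T (L (T u) v + R (T v) u) = m (T u) (T v) :=
  O_operator_induced_preLie_general m L R hbim1 hbim2 T hT
end

section
/- Let (g, ·) be a finite-dimensional pre-Lie algebra and let r ∈ g ⊗ g be symmetric (r ∈ Sym²(g)) with associated map r^♯: g* → g, ⟨r^♯(ξ), η⟩ = r(ξ, η). If r is an s-matrix (i.e. r^♯ is an 𝒪-operator on the bimodule (g*; ad*, −R*)), then ξ ·^{r^♯} η := ad*_{r^♯(ξ)} η − R*_{r^♯(η)} ξ defines a pre-Lie algebra structure on g*, and r^♯ is a pre-Lie homomorphism from (g*, ·^{r^♯}) to (g, ·). -/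
section OOperator

variable {R A V : Type*} [CommSemiring R] [AddCommGroup A] [Module R A]
  [AddCommGroup V] [Module R V]

structure IsPreLieBimodule_s15 (m : A →ₗ[R] A →ₗ[R] A) (l r : A →ₗ[R] Module.End R V) : Prop where
  left_left : ∀ x y v, l (m x y) v - l x (l y v) = l (m y x) v - l y (l x v)
  left_right : ∀ x y v, l x (r y v) - r y (l x v) = r (m x y) v - r y (r x v)

def oOperatorMul (l r : A →ₗ[R] Module.End R V) (T : V →ₗ[R] A) (u v : V) : V :=
  l (T u) v + r (T v) u

def IsOOperator (m : A →ₗ[R] A →ₗ[R] A) (l r : A →ₗ[R] Module.End R V) (T : V →ₗ[R] A) :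
    Prop :=
  ∀ u v, m (T u) (T v) = T (oOperatorMul l r T u v)

theorem IsOOperator.isPreLieMul_oOperatorMul {m : A →ₗ[R] A →ₗ[R] A}
    {l r : A →ₗ[R] Module.End R V} {T : V →ₗ[R] A} (hT : IsOOperator m l r T)
    (hlr : IsPreLieBimodule_s15 m l r) : IsPreLieMul (oOperatorMul l r T) := by
  intro u v w
  have hT' u v : T (l (T u) v + r (T v) u) = m (T u) (T v) := (hT u v).symm
  simp only [oOperatorMul, hT', map_add]
  have hl := hlr.left_left (T u) (T v) w
  have hr_u := hlr.left_right (T u) (T w) v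
  have hr_v := hlr.left_right (T v) (T w) u
  linear_combination (norm := abel_nf) hl + hr_v - hr_u

end OOperator

section Dual

open Module

variable {R A : Type*} [CommRing R] [AddCommGroup A] [Module R A]

/-- `ad*_x ξ = -ξ ∘ [x, ·]` -/
def dualAd (m : A →ₗ[R] A →ₗ[R] A) : A →ₗ[R] Module.End R (Dual R A) :=
  Dual.transpose ∘ₗ (m.flip - m)

/-- `-R*_x ξ = ξ ∘ (· x)` -/
def negDualRight (m : A →ₗ[R] A →ₗ[R] A) : A →ₗ[R] Module.End R (Dual R A) :=
  Dual.transpose ∘ₗ m.flip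

@[simp] theorem dualAd_apply_apply (m : A →ₗ[R] A →ₗ[R] A) (x : A) (ξ : Dual R A) (y : A) :
    dualAd m x ξ y = ξ (m y x - m x y) := rfl

@[simp] theorem negDualRight_apply_apply (m : A →ₗ[R] A →ₗ[R] A) (x : A) (ξ : Dual R A) (y : A) :
    negDualRight m x ξ y = ξ (m y x) := rfl

theorem isPreLieBimodule_dual {m : A →ₗ[R] A →ₗ[R] A} (hm : IsPreLieMul (fun x y => m x y)) :
    IsPreLieBimodule_s15 m (dualAd m) (negDualRight m) where
  left_left x y ξ := by
    ext z
    have hxyz := congrArg ξ (hm x y z)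
    have hzxy := congrArg ξ (hm z x y)
    have hyzx := congrArg ξ (hm y z x)
    simp only [LinearMap.sub_apply, dualAd_apply_apply, map_sub] at hxyz hzxy hyzx ⊢
    linear_combination -hxyz - hzxy - hyzx
  left_right x y ξ := by
    ext z
    have hzxy := congrArg ξ (hm z x y)
    simp only [LinearMap.sub_apply, dualAd_apply_apply, negDualRight_apply_apply, map_sub]
      at hzxy ⊢
    linear_combination hzxy

theorem oOperatorMul_dualAd_negDualRight (m : A →ₗ[R] A →ₗ[R] A) (T : Dual R A →ₗ[R] A)
    (ξ η : Dual R A) :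
    oOperatorMul (dualAd m) (negDualRight m) T ξ η =
      -((m (T ξ) - m.flip (T ξ)).dualMap η) + (m.flip (T η)).dualMap ξ := by
  ext y
  simp [oOperatorMul]

end Dual

theorem s_matrix_induced_preLie_on_dual_general
    {𝕜 G : Type*} [Field 𝕜] [AddCommGroup G] [Module 𝕜 G]
    (m : G →ₗ[𝕜] G →ₗ[𝕜] G)
    (hm : ∀ x y z : G, m (m x y) z - m x (m y z) = m (m y x) z - m y (m x z))
    (rs : Module.Dual 𝕜 G →ₗ[𝕜] G)
    (hO : ∀ ξ η : Module.Dual 𝕜 G,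
      m (rs ξ) (rs η) =
        rs (-((m (rs ξ) - m.flip (rs ξ)).dualMap η) +
          (m.flip (rs η)).dualMap ξ)) :
    IsPreLieMul (fun ξ η : Module.Dual 𝕜 G =>
        -((m (rs ξ) - m.flip (rs ξ)).dualMap η) + (m.flip (rs η)).dualMap ξ) ∧
      ∀ ξ η : Module.Dual 𝕜 G,
        rs (-((m (rs ξ) - m.flip (rs ξ)).dualMap η) +
            (m.flip (rs η)).dualMap ξ) = m (rs ξ) (rs η) := by
  simp only [← oOperatorMul_dualAd_negDualRight] at hO ⊢
  exact ⟨IsOOperator.isPreLieMul_oOperatorMul hO (isPreLieBimodule_dual hm),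
    fun ξ η => (hO ξ η).symm⟩

/-- Let `(g, ·)` be a finite-dimensional pre-Lie algebra and
`r ∈ Sym²(g)` an s-matrix, i.e. `r^♯ : g* → g` is symmetric
(`⟨r^♯ξ, η⟩ = ⟨ξ, r^♯η⟩`) and is an 𝒪-operator on `(g*; ad*, −R*)`, where
`(ad*_x ξ)(y) = −ξ([x,y])` and `(−R*_x ξ)(y) = ξ(y·x)`.  Then
`ξ ·^{r^♯} η := ad*_{r^♯ξ} η − R*_{r^♯η} ξ` is a pre-Lie structure on `g*` and
`r^♯` is a pre-Lie homomorphism from `(g*, ·^{r^♯})` to `(g, ·)`. -/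
theorem s_matrix_induced_preLie_on_dual
    {𝕜 G : Type*} [Field 𝕜] [CharZero 𝕜] [AddCommGroup G] [Module 𝕜 G]
    [FiniteDimensional 𝕜 G]
    (m : G →ₗ[𝕜] G →ₗ[𝕜] G)
    (hm : ∀ x y z : G, m (m x y) z - m x (m y z) = m (m y x) z - m y (m x z))
    (rs : Module.Dual 𝕜 G →ₗ[𝕜] G)
    (hsym : ∀ ξ η : Module.Dual 𝕜 G, η (rs ξ) = ξ (rs η))
    (hO : ∀ ξ η : Module.Dual 𝕜 G,
      m (rs ξ) (rs η) =
        rs (-((m (rs ξ) - m.flip (rs ξ)).dualMap η) +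
          (m.flip (rs η)).dualMap ξ)) :
    IsPreLieMul (fun ξ η : Module.Dual 𝕜 G =>
        -((m (rs ξ) - m.flip (rs ξ)).dualMap η) + (m.flip (rs η)).dualMap ξ) ∧
      ∀ ξ η : Module.Dual 𝕜 G,
        rs (-((m (rs ξ) - m.flip (rs ξ)).dualMap η) +
            (m.flip (rs η)).dualMap ξ) = m (rs ξ) (rs η) :=
  s_matrix_induced_preLie_on_dual_general m hm rs hO
end

section
/- Let (g, [−,−], ω) be a symplectic Lie algebra, i.e. ω is a nondegenerate skew-symmetric bilinear form with ω([x,y],z) + ω([y,z],x) + ω([z,x],y) = 0. Then the product x·y defined by ω(x·y, z) = −ω(y, [x,z]) is a pre-Lie algebra structure on g whose commutator recovers the Lie bracket: x·y − y·x = [x,y]. -/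
/-!
The defining relation says that left multiplication `L x : y ↦ x·y` is minus the
`ω`-adjoint of `ad x`. The cocycle condition then reads `ω(x·y - y·x, z) = ω([x,y], z)`, and
since taking adjoints reverses products, the Jacobi identity `ad [x,y] = [ad x, ad y]` turns into
`L [x,y] = [L x, L y]`. Combined with `x·y - y·x = [x,y]` this is exactly the pre-Lie identity.
-/

section

variable {R M : Type*} [CommRing R] [AddCommGroup M] [Module R M]

theorem eq_of_forall_form_eq {ω : M →ₗ[R] M →ₗ[R] R}
    (hnd : ∀ x : M, (∀ y : M, ω x y = 0) → x = 0)
    {a b : M} (h : ∀ z : M, ω a z = ω b z) : a = b :=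
  sub_eq_zero.mp <| hnd _ fun z => by rw [map_sub, LinearMap.sub_apply, h, sub_self]

theorem bracket_bracket_eq_of_jacobi {br : M →ₗ[R] M →ₗ[R] M}
    (hskew : ∀ x y : M, br x y = -br y x)
    (hjac : ∀ x y z : M, br (br x y) z + br (br y z) x + br (br z x) y = 0) (x y z : M) :
    br (br x y) z = br x (br y z) - br y (br x z) := by
  have e1 : br (br y z) x = -br x (br y z) := hskew _ _
  have e2 : br (br z x) y = br y (br x z) := by
    rw [hskew z x, map_neg, LinearMap.neg_apply, hskew y (br x z)]
  linear_combination (norm := abel) hjac x y z - e1 - e2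

variable {br : M →ₗ[R] M →ₗ[R] M} {ω : M →ₗ[R] M →ₗ[R] R} {m : M →ₗ[R] M →ₗ[R] M}

theorem mul_sub_mul_swap_eq_bracket (hskew : ∀ x y : M, br x y = -br y x)
    (hωskew : ∀ x y : M, ω x y = -ω y x) (hωnd : ∀ x : M, (∀ y : M, ω x y = 0) → x = 0)
    (hωcoc : ∀ x y z : M, ω (br x y) z + ω (br y z) x + ω (br z x) y = 0)
    (hdef : ∀ x y z : M, ω (m x y) z = -ω y (br x z)) (x y : M) :
    m x y - m y x = br x y := by
  refine eq_of_forall_form_eq hωnd fun z => ?_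
  have h1 : ω (br z x) y = -ω (br x z) y := by
    rw [hskew z x, map_neg, LinearMap.neg_apply]
  rw [map_sub, LinearMap.sub_apply, hdef x y z, hdef y x z]
  linear_combination hωskew x (br y z) - hωskew y (br x z) - hωcoc x y z + h1

theorem mul_bracket_eq_mul_mul_sub (hωnd : ∀ x : M, (∀ y : M, ω x y = 0) → x = 0)
    (hdef : ∀ x y z : M, ω (m x y) z = -ω y (br x z))
    (had : ∀ x y z : M, br (br x y) z = br x (br y z) - br y (br x z)) (x y w : M) :
    m (br x y) w = m x (m y w) - m y (m x w) := by
  refine eq_of_forall_form_eq hωnd fun z => ?_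
  rw [map_sub, LinearMap.sub_apply, hdef, hdef, hdef, hdef, hdef, had, map_sub]
  ring

theorem isPreLieMul_of_mul_commutator
    (h : ∀ x y z : M, m (m x y - m y x) z = m x (m y z) - m y (m x z)) :
    IsPreLieMul (fun x y : M => m x y) := by
  intro x y z
  have hxyz := h x y z
  rw [map_sub, LinearMap.sub_apply] at hxyz
  linear_combination (norm := abel) hxyz

end

theorem symplectic_compatible_preLie_general
    {𝕜 G : Type*} [Field 𝕜] [AddCommGroup G] [Module 𝕜 G]
    (br : G →ₗ[𝕜] G →ₗ[𝕜] G)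
    (hskew : ∀ x y : G, br x y = -br y x)
    (hjac : ∀ x y z : G, br (br x y) z + br (br y z) x + br (br z x) y = 0)
    (ω : G →ₗ[𝕜] G →ₗ[𝕜] 𝕜)
    (hωskew : ∀ x y : G, ω x y = -ω y x)
    (hωnd : ∀ x : G, (∀ y : G, ω x y = 0) → x = 0)
    (hωcoc : ∀ x y z : G, ω (br x y) z + ω (br y z) x + ω (br z x) y = 0)
    (m : G →ₗ[𝕜] G →ₗ[𝕜] G)
    (hdef : ∀ x y z : G, ω (m x y) z = -ω y (br x z)) :
    IsPreLieMul (fun x y : G => m x y) ∧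
      ∀ x y : G, m x y - m y x = br x y := by
  have hcomm := mul_sub_mul_swap_eq_bracket hskew hωskew hωnd hωcoc hdef
  have hL := mul_bracket_eq_mul_mul_sub hωnd hdef (bracket_bracket_eq_of_jacobi hskew hjac)
  exact ⟨isPreLieMul_of_mul_commutator fun x y z => by rw [hcomm]; exact hL x y z, hcomm⟩

/-- Let `(g, [−,−], ω)` be a symplectic Lie algebra (`ω`
nondegenerate skew-symmetric with
`ω([x,y],z) + ω([y,z],x) + ω([z,x],y) = 0`).  Then the product `x·y` defined
by `ω(x·y, z) = −ω(y, [x,z])` is a pre-Lie structure on `g` whose commutator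
recovers the Lie bracket: `x·y − y·x = [x,y]`. -/
theorem symplectic_compatible_preLie
    {𝕜 G : Type*} [Field 𝕜] [CharZero 𝕜] [AddCommGroup G] [Module 𝕜 G]
    [FiniteDimensional 𝕜 G]
    (br : G →ₗ[𝕜] G →ₗ[𝕜] G)
    (hskew : ∀ x y : G, br x y = -br y x)
    (hjac : ∀ x y z : G, br (br x y) z + br (br y z) x + br (br z x) y = 0)
    (ω : G →ₗ[𝕜] G →ₗ[𝕜] 𝕜)
    (hωskew : ∀ x y : G, ω x y = -ω y x)
    (hωnd : ∀ x : G, (∀ y : G, ω x y = 0) → x = 0)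
    (hωcoc : ∀ x y z : G, ω (br x y) z + ω (br y z) x + ω (br z x) y = 0)
    (m : G →ₗ[𝕜] G →ₗ[𝕜] G)
    (hdef : ∀ x y z : G, ω (m x y) z = -ω y (br x z)) :
    IsPreLieMul (fun x y : G => m x y) ∧
      ∀ x y : G, m x y - m y x = br x y :=
  symplectic_compatible_preLie_general br hskew hjac ω hωskew hωnd hωcoc m hdef
end

section
/- Let (g, ·) be a pre-Lie algebra. The semi-direct product pre-Lie algebra d = g ⋉ g* with multiplication (x,ξ)∗(y,η) = (x·y, ad*_x η − R*_y ξ) together with the bilinear form ((x,ξ),(y,η))₋ = ⟨ξ,y⟩ − ⟨x,η⟩ is a quadratic pre-Lie algebra: the form is nondegenerate, skew-symmetric, and invariant, i.e. (a∗b, c)₋ + (b, [a,c])₋ = 0 for all a,b,c ∈ d, where [a,c] = a∗c − c∗a. -/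
section

variable {R M : Type*} [CommRing R] [AddCommGroup M] [Module R M]

def semidirectDualMul (m : M →ₗ[R] M →ₗ[R] M) (p q : M × Module.Dual R M) :
    M × Module.Dual R M :=
  (m p.1 q.1, -((m p.1 - m.flip p.1).dualMap q.2) + (m.flip q.1).dualMap p.2)

def dualPairingSkewForm (p q : M × Module.Dual R M) : R :=
  p.2 q.1 - q.2 p.1

section semidirectDualMul

variable (m : M →ₗ[R] M →ₗ[R] M) (p q : M × Module.Dual R M)

@[simp]
lemma semidirectDualMul_fst : (semidirectDualMul m p q).1 = m p.1 q.1 := rfl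

@[simp]
lemma semidirectDualMul_snd_apply (w : M) :
    (semidirectDualMul m p q).2 w = p.2 (m w q.1) - q.2 (m p.1 w - m w p.1) := by
  simp only [semidirectDualMul, LinearMap.add_apply, LinearMap.neg_apply,
    LinearMap.dualMap_apply, LinearMap.sub_apply, LinearMap.flip_apply]
  ring

theorem isPreLieMul_semidirectDualMul (hm : IsPreLieMul (fun x y ↦ m x y)) :
    IsPreLieMul (semidirectDualMul m) := by
  have hφ (φ : Module.Dual R M) (x y z : M) :
      φ (m (m x y) z) - φ (m x (m y z)) = φ (m (m y x) z) - φ (m y (m x z)) := by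
    simpa only [map_sub] using congrArg φ (hm x y z)
  rintro ⟨x, ξ⟩ ⟨y, η⟩ ⟨z, ζ⟩
  refine Prod.ext (hm x y z) (LinearMap.ext fun w ↦ ?_)
  simp only [Prod.snd_sub, LinearMap.sub_apply, semidirectDualMul_fst,
    semidirectDualMul_snd_apply, map_sub]
  -- The `ζ`-terms cancel by the Jacobi identity of the commutator, i.e. by three pre-Lie
  -- identities; the `η`- and `ξ`-terms by one each.
  linear_combination -hφ ζ x y w - hφ ζ w x y - hφ ζ y w x + hφ η x w z - hφ ξ y w z

theorem dualPairingSkewForm_semidirectDualMul_invariant (a b c : M × Module.Dual R M) :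
    dualPairingSkewForm (semidirectDualMul m a b) c +
      dualPairingSkewForm b (semidirectDualMul m a c - semidirectDualMul m c a) = 0 := by
  simp only [dualPairingSkewForm, Prod.fst_sub, Prod.snd_sub, LinearMap.sub_apply,
    semidirectDualMul_fst, semidirectDualMul_snd_apply, map_sub]
  ring

end semidirectDualMul

theorem dualPairingSkewForm_eq_neg_swap (p q : M × Module.Dual R M) :
    dualPairingSkewForm p q = -dualPairingSkewForm q p := by
  simp only [dualPairingSkewForm]
  ring

theorem dualPairingSkewForm_nondegenerate [Module.Projective R M] (p : M × Module.Dual R M)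
    (hp : ∀ q, dualPairingSkewForm p q = 0) : p = 0 := by
  obtain ⟨x, ξ⟩ := p
  have hξ : ξ = 0 := LinearMap.ext fun y ↦ by simpa [dualPairingSkewForm] using hp (y, 0)
  have hx : x = 0 := (Module.forall_dual_apply_eq_zero_iff R x).mp fun φ ↦ by
    simpa [dualPairingSkewForm] using hp (0, φ)
  simp [hξ, hx]

end

theorem semidirect_dual_quadratic_preLie_general
    {𝕜 G : Type*} [Field 𝕜] [AddCommGroup G] [Module 𝕜 G]
    (m : G →ₗ[𝕜] G →ₗ[𝕜] G)
    (hm : ∀ x y z : G, m (m x y) z - m x (m y z) = m (m y x) z - m y (m x z)) :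
    let f : (G × Module.Dual 𝕜 G) → (G × Module.Dual 𝕜 G) →
        (G × Module.Dual 𝕜 G) :=
      fun p q => (m p.1 q.1,
        -((m p.1 - m.flip p.1).dualMap q.2) + (m.flip q.1).dualMap p.2)
    let B : (G × Module.Dual 𝕜 G) → (G × Module.Dual 𝕜 G) → 𝕜 :=
      fun p q => p.2 q.1 - q.2 p.1
    IsPreLieMul f ∧
      (∀ p q : G × Module.Dual 𝕜 G, B p q = -B q p) ∧
      (∀ p : G × Module.Dual 𝕜 G, (∀ q, B p q = 0) → p = 0) ∧
      (∀ a b c : G × Module.Dual 𝕜 G, B (f a b) c + B b (f a c - f c a) = 0) :=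
  ⟨isPreLieMul_semidirectDualMul m hm, dualPairingSkewForm_eq_neg_swap,
    dualPairingSkewForm_nondegenerate, dualPairingSkewForm_semidirectDualMul_invariant m⟩

/-- For a finite-dimensional pre-Lie algebra `(g, ·)`, the
semi-direct product `d = g ⋉ g*` with
`(x,ξ) ∗ (y,η) = (x·y, ad*_x η − R*_y ξ)`, where `(ad*_x η)(z) = −η([x,z])`
and `(−R*_y ξ)(z) = ξ(z·y)`, together with
`((x,ξ),(y,η))₋ = ⟨ξ,y⟩ − ⟨x,η⟩`, is a quadratic pre-Lie algebra: the
multiplication is pre-Lie and the form is nondegenerate, skew-symmetric and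
invariant: `(a∗b, c)₋ + (b, a∗c − c∗a)₋ = 0`. -/
theorem semidirect_dual_quadratic_preLie
    {𝕜 G : Type*} [Field 𝕜] [CharZero 𝕜] [AddCommGroup G] [Module 𝕜 G]
    [FiniteDimensional 𝕜 G]
    (m : G →ₗ[𝕜] G →ₗ[𝕜] G)
    (hm : ∀ x y z : G, m (m x y) z - m x (m y z) = m (m y x) z - m y (m x z)) :
    let f : (G × Module.Dual 𝕜 G) → (G × Module.Dual 𝕜 G) →
        (G × Module.Dual 𝕜 G) :=
      fun p q => (m p.1 q.1,
        -((m p.1 - m.flip p.1).dualMap q.2) + (m.flip q.1).dualMap p.2)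
    let B : (G × Module.Dual 𝕜 G) → (G × Module.Dual 𝕜 G) → 𝕜 :=
      fun p q => p.2 q.1 - q.2 p.1
    IsPreLieMul f ∧
      (∀ p q : G × Module.Dual 𝕜 G, B p q = -B q p) ∧
      (∀ p : G × Module.Dual 𝕜 G, (∀ q, B p q = 0) → p = 0) ∧
      (∀ a b c : G × Module.Dual 𝕜 G, B (f a b) c + B b (f a c - f c a) = 0) :=
  semidirect_dual_quadratic_preLie_general m hm
end
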